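/- arXiv:1812.05248 — 3 statements merged into one kernel-verified Lean document; each statement's English description precedes it below -/
import Mathlib

section
/- Let A be a 2×2 real matrix with nonnegative entries summing to 1 (a joint probability matrix) and let λ_1 ≥ λ_2 ≥ 0 be its singular values. Then (1 − √(1 − 2|det A|))/2 ≤ λ_2 ≤ √(|det A|). -/
/-- For a 2×2 joint probability matrix `A` with singular values
`λ₁ ≥ λ₂ ≥ 0` (characterized by `λ₁² + λ₂² = tr(AᵀA)` and `λ₁λ₂ = |det A|`),
one has `(1 - √(1 - 2|det A|))/2 ≤ λ₂ ≤ √|det A|`. -/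
theorem second_singular_value_bounds
    (A : Matrix (Fin 2) (Fin 2) ℝ) (l1 l2 : ℝ)
    (hnonneg : ∀ x y, 0 ≤ A x y)
    (hsum : ∑ x, ∑ y, A x y = 1)
    (horder : l2 ≤ l1) (hl2 : 0 ≤ l2)
    (htrace : l1 ^ 2 + l2 ^ 2 = Matrix.trace (A.transpose * A))
    (hprod : l1 * l2 = |A.det|) :
    (1 - Real.sqrt (1 - 2 * |A.det|)) / 2 ≤ l2 ∧ l2 ≤ Real.sqrt |A.det| := by
  set a := A 0 0 with ha
  set b := A 0 1 with hb
  set c := A 1 0 with hc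
  set d := A 1 1 with hd
  have h00 := hnonneg 0 0
  have h01 := hnonneg 0 1
  have h10 := hnonneg 1 0
  have h11 := hnonneg 1 1
  have hsum' : a + b + c + d = 1 := by
    have := hsum
    simp [Fin.sum_univ_two, ← ha, ← hb, ← hc, ← hd] at this
    linarith
  have htr : Matrix.trace (A.transpose * A) = a^2 + b^2 + c^2 + d^2 := by
    simp [Matrix.trace, Matrix.mul_apply, Fin.sum_univ_two, Matrix.transpose_apply]
    ring
  have hdet : A.det = a * d - b * c := by
    rw [Matrix.det_fin_two]
  have habs : |A.det| ≤ a * d + b * c := by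
    rw [hdet, abs_sub_le_iff]
    constructor <;> nlinarith
  have hD0 : (0:ℝ) ≤ |A.det| := abs_nonneg _
  have hDhalf : 2 * |A.det| ≤ 1 := by nlinarith
  have htr1 : l1 ^ 2 + l2 ^ 2 ≤ 1 := by
    rw [htrace, htr]; nlinarith
  have hl1 : l1 ≤ 1 := by nlinarith
  have hDle : |A.det| ≤ l2 := by nlinarith
  constructor
  · -- (1 - √(1-2D))/2 ≤ D ≤ l2
    have ht0 : (0:ℝ) ≤ 1 - 2 * |A.det| := by linarith
    have ht1 : 1 - 2 * |A.det| ≤ 1 := by linarith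
    have hsq : 1 - 2 * |A.det| ≤ Real.sqrt (1 - 2 * |A.det|) := by
      rw [Real.le_sqrt ht0]
      · nlinarith
      · exact ht0
    linarith
  · have : l2 ^ 2 ≤ |A.det| := by nlinarith
    calc l2 = Real.sqrt (l2 ^ 2) := by rw [Real.sqrt_sq hl2]
      _ ≤ Real.sqrt |A.det| := Real.sqrt_le_sqrt this
end

section
/- First-order bound on change of negative log-likelihood under SVD truncation: assume the linearization L_n(T_A) = L_n(T_B) + ⟨∂L_n(T_B)/∂B, A − B⟩ holds exactly, that ⟨∂L_n(T_B)/∂B, B⟩ = 0, and that B = U S* Vᵀ/(1−ε) is the normalized rank-d truncation of A = U S Vᵀ with ‖S‖_F = 1 and ε = 1 − ‖S*‖_F. Then L_n(T_A) − L_n(T_B) ≤ √(2ε) · ‖∂L_n(T_B)/∂B‖_F. -/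
/-- Frobenius norm of a real matrix. -/
noncomputable def frob {m n : ℕ} (M : Matrix (Fin m) (Fin n) ℝ) : ℝ :=
  Real.sqrt (∑ i, ∑ j, (M i j) ^ 2)

lemma frob_sq_eq_trace {m n : ℕ} (M : Matrix (Fin m) (Fin n) ℝ) :
    ∑ i, ∑ j, (M i j) ^ 2 = Matrix.trace (M.transpose * M) := by
  simp only [Matrix.trace, Matrix.diag, Matrix.mul_apply, Matrix.transpose_apply, sq]
  exact Finset.sum_comm

lemma frob_sq_conj {m n : ℕ} (U : Matrix (Fin m) (Fin m) ℝ) (V : Matrix (Fin n) (Fin n) ℝ)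
    (hU : U.transpose * U = 1) (hV : V.transpose * V = 1)
    (M : Matrix (Fin m) (Fin n) ℝ) :
    ∑ i, ∑ j, ((U * M * V.transpose) i j) ^ 2 = ∑ i, ∑ j, (M i j) ^ 2 := by
  rw [frob_sq_eq_trace, frob_sq_eq_trace]
  have h2 : U.transpose * (U * (M * V.transpose)) = M * V.transpose := by
    rw [← Matrix.mul_assoc, hU, Matrix.one_mul]
  have h1 : (U * M * V.transpose).transpose * (U * M * V.transpose)
      = V * (M.transpose * M * V.transpose) := by
    simp only [Matrix.transpose_mul, Matrix.transpose_transpose, Matrix.mul_assoc, h2]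
  rw [h1, Matrix.trace_mul_comm, Matrix.mul_assoc, Matrix.mul_assoc, hV, Matrix.mul_one]

/-- first-order bound on the change of the negative
log-likelihood under normalized SVD truncation. Assume the linearization
`L(A) = L(B) + ⟨G, A - B⟩` holds exactly with `G` the gradient at `B`,
`⟨G, B⟩ = 0`, `A = U S Vᵀ` with `U, V` orthogonal and `S` diagonal with
`‖S‖_F = 1` and nonnegative entries, and `B = U S* Vᵀ / (1-ε)` is the
normalized rank-`d` truncation with `ε = 1 - ‖S*‖_F < 1`. Then
`L(A) - L(B) ≤ √(2ε) ‖G‖_F`. -/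
theorem nll_change_bound_under_truncation {m n : ℕ}
    (L : Matrix (Fin m) (Fin n) ℝ → ℝ)
    (U : Matrix (Fin m) (Fin m) ℝ) (V : Matrix (Fin n) (Fin n) ℝ)
    (hU : U.transpose * U = 1) (hV : V.transpose * V = 1)
    (S : Matrix (Fin m) (Fin n) ℝ)
    (hdiag : ∀ (i : Fin m) (j : Fin n), (i : ℕ) ≠ (j : ℕ) → S i j = 0)
    (hSnonneg : ∀ (i : Fin m) (j : Fin n), 0 ≤ S i j)
    (hnorm : frob S = 1)
    (d : ℕ)
    (Sstar : Matrix (Fin m) (Fin n) ℝ)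
    (hSstar : ∀ (i : Fin m) (j : Fin n), Sstar i j = if (i : ℕ) < d then S i j else 0)
    (ε : ℝ) (hε : ε = 1 - frob Sstar) (hε1 : ε < 1)
    (A B : Matrix (Fin m) (Fin n) ℝ)
    (hA : A = U * S * V.transpose)
    (hB : B = (1 / (1 - ε)) • (U * Sstar * V.transpose))
    (G : Matrix (Fin m) (Fin n) ℝ)
    (hlin : L A = L B + ∑ i, ∑ j, G i j * (A i j - B i j))
    (horth : ∑ i, ∑ j, G i j * B i j = 0) :
    L A - L B ≤ Real.sqrt (2 * ε) * frob G := by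
  set c : ℝ := 1 / (1 - ε) with hc
  have h1ε : (0:ℝ) < 1 - ε := by linarith
  have hSsq : ∑ i, ∑ j, (S i j) ^ 2 = 1 := by
    have h0 : (0:ℝ) ≤ ∑ i, ∑ j, (S i j) ^ 2 :=
      Finset.sum_nonneg fun i _ => Finset.sum_nonneg fun j _ => sq_nonneg _
    have := hnorm
    unfold frob at this
    nlinarith [Real.sq_sqrt h0]
  have hfS : frob Sstar = 1 - ε := by linarith [hε]
  have hSstarsq : ∑ i, ∑ j, (Sstar i j) ^ 2 = (1 - ε) ^ 2 := by
    have h0 : (0:ℝ) ≤ ∑ i, ∑ j, (Sstar i j) ^ 2 :=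
      Finset.sum_nonneg fun i _ => Finset.sum_nonneg fun j _ => sq_nonneg _
    have := hfS
    unfold frob at this
    nlinarith [Real.sq_sqrt h0]
  -- ε is nonnegative
  have hεnn : 0 ≤ ε := by
    have hle : ∑ i, ∑ j, (Sstar i j) ^ 2 ≤ ∑ i, ∑ j, (S i j) ^ 2 := by
      refine Finset.sum_le_sum fun i _ => Finset.sum_le_sum fun j _ => ?_
      rcases lt_or_ge (i : ℕ) d with h | h
      · rw [hSstar, if_pos h]
      · rw [hSstar, if_neg (by omega)]; nlinarith [sq_nonneg (S i j)]
    nlinarith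
  have hAB : A - B = U * (S - c • Sstar) * V.transpose := by
    rw [hA, hB, Matrix.mul_sub, Matrix.sub_mul, Matrix.mul_smul, Matrix.smul_mul]
  have key : ∀ (i : Fin m) (j : Fin n),
      (S i j - c * Sstar i j) ^ 2 = (S i j) ^ 2 + (c ^ 2 - 2 * c) * (Sstar i j) ^ 2 := by
    intro i j
    rcases lt_or_ge (i : ℕ) d with h | h
    · rw [hSstar, if_pos h]; ring
    · rw [hSstar, if_neg (by omega)]; ring
  have hABsq : ∑ i, ∑ j, ((A - B) i j) ^ 2 = 2 * ε := by
    rw [hAB, frob_sq_conj U V hU hV]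
    have hpt : ∀ (i : Fin m) (j : Fin n), (S - c • Sstar) i j = S i j - c * Sstar i j := by
      intro i j; rfl
    simp only [hpt, key, Finset.sum_add_distrib, ← Finset.mul_sum]
    rw [hSsq, hSstarsq]
    have hc1 : c * (1 - ε) = 1 := by rw [hc]; field_simp
    nlinarith [hc1]
  have hCS : ∑ i, ∑ j, G i j * (A i j - B i j) ≤ Real.sqrt (2 * ε) * frob G := by
    have hAB2 : ∑ p : Fin m × Fin n, ((A - B) p.1 p.2) ^ 2 = 2 * ε := by
      rw [Fintype.sum_prod_type]; exact hABsq
    have hAB2nn : (0:ℝ) ≤ ∑ p : Fin m × Fin n, ((A - B) p.1 p.2) ^ 2 :=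
      Finset.sum_nonneg fun p _ => sq_nonneg _
    have cs2 := Finset.sum_mul_sq_le_sq_mul_sq Finset.univ
      (fun p : Fin m × Fin n => G p.1 p.2) (fun p => (A - B) p.1 p.2)
    calc ∑ i, ∑ j, G i j * (A i j - B i j)
        = ∑ p : Fin m × Fin n, G p.1 p.2 * ((A - B) p.1 p.2) := by
          rw [Fintype.sum_prod_type]; simp [Matrix.sub_apply]
      _ ≤ |∑ p : Fin m × Fin n, G p.1 p.2 * ((A - B) p.1 p.2)| := le_abs_self _
      _ = Real.sqrt ((∑ p : Fin m × Fin n, G p.1 p.2 * ((A - B) p.1 p.2)) ^ 2) :=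
          (Real.sqrt_sq_eq_abs _).symm
      _ ≤ Real.sqrt ((∑ p : Fin m × Fin n, (G p.1 p.2) ^ 2) *
            (∑ p : Fin m × Fin n, ((A - B) p.1 p.2) ^ 2)) := Real.sqrt_le_sqrt cs2
      _ = Real.sqrt (2 * ε) * frob G := by
          rw [hAB2, mul_comm, Real.sqrt_mul (by linarith), frob, Fintype.sum_prod_type]
  rw [hlin]
  linarith
end

section
/- Sequential SVD gives an exact MPS: any tensor T ∈ ℝ^{w_1 × ⋯ × w_N} admits an exact MPS decomposition T_{σ_1…σ_N} = Σ_{a_1,…,a_{N-1}} A^{(1)}_{σ_1 a_1} A^{(2)}_{a_1 σ_2 a_2} ⋯ A^{(N)}_{a_{N-1} σ_N} with bond dimensions r_k = rank(T_k), where T_k is the k-th unfolding matrix. -/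
/-!
The row space `R_k` of the `k`-th unfolding is a space of functions of the last `N - k` indices,
of dimension `r_k`. For `f ∈ R_k` and each value `s` of the next index, `b ↦ f (s, b)` lies in
`R_{k+1}`, as it does for the rows of the unfolding. Fixing bases of all `R_k`, the core at site
`k + 1` with physical index `s` is the matrix of this map `R_k → R_{k+1}`, so the coordinates
`c_k` of the row of the `k`-th unfolding at the prefix `σ₁ ⋯ σ_k` satisfy
`c_{k+1} = c_k A_{σ_{k+1}}`. Since `T σ` is `c_N` paired with the basis of `R_N`, unrolling this
recursion writes `T σ` as a sum over bond paths; the boundary vectors (`c_0` and the basis of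
`R_N`, in spaces of dimension at most `1`) are absorbed into the first and last cores.
-/

/-- The `k`-th unfolding matrix of an `N`-th order tensor `T` (all physical
dimensions equal to `p`). -/
def unfolding (N p : ℕ) (T : (Fin N → Fin p) → ℝ) (k : Fin (N + 1)) :
    Matrix (Fin k.val → Fin p) (Fin (N - k.val) → Fin p) ℝ :=
  fun a b => T (fun i =>
    if h : i.val < k.val then a ⟨i.val, h⟩
    else b ⟨i.val - k.val, by have := i.isLt; omega⟩)

open Finset

namespace Fin

theorem sum_pi_mul_prod_mul_eq_sum_last {R : Type*} [CommSemiring R] {n : ℕ}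
    {ι : Fin (n + 1) → Type*} [∀ k, Fintype (ι k)]
    (x : ∀ k, ι k → R) (M : ∀ k : Fin n, ι k.castSucc → ι k.succ → R)
    (hx : ∀ k j, x k.succ j = ∑ i, x k.castSucc i * M k i j) (y : ι (last n) → R) :
    ∑ a : (∀ k, ι k), x 0 (a 0) * (∏ k, M k (a k.castSucc) (a k.succ)) * y (a (last n))
      = ∑ j, x (last n) j * y j := by
  induction n with
  | zero =>
    simp only [univ_eq_empty, prod_empty, mul_one]
    exact Fintype.sum_equiv (Equiv.piUnique (α := Fin 1) ι) _ (fun j => x 0 j * y j) fun _ => rfl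
  | succ n ih =>
    rw [← (snocEquiv ι).sum_comp, Fintype.sum_prod_type, Finset.sum_comm]
    simp only [snocEquiv, Equiv.coe_fn_mk, prod_univ_castSucc, snoc_castSucc, succ_castSucc,
      snoc_last, succ_last]
    calc _ = ∑ a : (∀ k : Fin (n + 1), ι k.castSucc),
          x (castSucc 0) (a 0) * (∏ k : Fin n, M k.castSucc (a k.castSucc) (a k.succ)) *
            ∑ j, M (last n) (a (last n)) j * y j := by
          refine sum_congr rfl fun a _ => ?_
          rw [mul_sum]
          refine sum_congr rfl fun j _ => ?_
          change x (castSucc 0) (a 0) * _ * _ = _ -- `snoc a j 0` reduces to `a 0`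
          ring
      _ = ∑ i, x (last n).castSucc i * ∑ j, M (last n) i j * y j :=
          ih (ι := fun k => ι k.castSucc) (fun k => x k.castSucc)
            (fun k => M k.castSucc) (fun k j => hx k.castSucc j)
            (fun i => ∑ j, M (last n) i j * y j)
      _ = ∑ j, x (last (n + 1)) j * y j := by
          simp only [mul_sum, ← mul_assoc]
          rw [sum_comm]
          refine sum_congr rfl fun j _ => ?_
          rw [← sum_mul]
          exact congrArg (· * y j) (hx (last n) j).symm

theorem exists_prod_eq_mul_prod_mul {R β : Type*} [CommMonoid R] {n : ℕ} (hn : 0 < n)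
    {ι : Fin (n + 1) → Type*} (u : ι 0 → R) (M : ∀ k : Fin n, ι k.castSucc → β → ι k.succ → R)
    (v : ι (last n) → R) :
    ∃ M' : ∀ k : Fin n, ι k.castSucc → β → ι k.succ → R, ∀ (σ : Fin n → β) (a : ∀ k, ι k),
      ∏ k, M' k (a k.castSucc) (σ k) (a k.succ)
        = u (a 0) * (∏ k, M k (a k.castSucc) (σ k) (a k.succ)) * v (a (last n)) := by
  refine ⟨fun k i s j => (if h : k.castSucc = 0 then u (cast (congrArg ι h) i) else 1) *
    M k i s j * (if h : k.succ = last n then v (cast (congrArg ι h) j) else 1),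
    fun σ a => ?_⟩
  have hcast : ∀ {k l : Fin (n + 1)} (h : k = l), cast (congrArg ι h) (a k) = a l :=
    fun h => cast_eq_iff_heq.mpr (congr_arg_heq a h)
  let first : Fin n := ⟨0, hn⟩
  let final : Fin n := ⟨n - 1, by omega⟩
  have h_first : first.castSucc = 0 := rfl
  have h_final : final.succ = last n := Fin.ext (by simp [final]; omega)
  simp only [prod_mul_distrib]
  congr 2
  · rw [prod_eq_single first (fun k _ hk => dif_neg fun h => hk (castSucc_injective _ h))
      (fun h => (h (mem_univ _)).elim), dif_pos h_first, hcast h_first]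
  · rw [prod_eq_single final
      (fun k _ hk => dif_neg fun h => hk (succ_injective _ (h.trans h_final.symm)))
      (fun h => (h (mem_univ _)).elim), dif_pos h_final, hcast h_final]

end Fin

namespace MPS

variable {N p : ℕ} (T : (Fin N → Fin p) → ℝ)

def suffixCons (k : Fin N) (s : Fin p) (b : Fin (N - k.succ) → Fin p) :
    Fin (N - k.castSucc) → Fin p :=
  Fin.cons s b ∘ Fin.cast (by simp; omega)

theorem funLeft_suffixCons_unfolding (k : Fin N) (s : Fin p) (a : Fin k → Fin p) :
    LinearMap.funLeft ℝ ℝ (suffixCons k s) (unfolding N p T k.castSucc a)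
      = unfolding N p T k.succ (Fin.snoc a s) := by
  funext b
  simp only [LinearMap.funLeft_apply, unfolding, suffixCons, Function.comp_apply]
  congr 1
  funext i
  rcases lt_trichotomy i.val k.val with h | h | h
  · simp [h, Nat.lt_succ_of_lt h, Fin.snoc]
  · simp [h, Fin.snoc]
  · rw [dif_neg (by simp; omega), dif_neg (by simp; omega)]
    convert Fin.cons_succ (α := fun _ => Fin p) s b ⟨i - k.succ, by simp; omega⟩ using 2
    ext
    simp
    omega

def rowSpace (k : Fin (N + 1)) : Submodule ℝ ((Fin (N - k) → Fin p) → ℝ) :=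
  Submodule.span ℝ (Set.range (unfolding N p T k))

def row (k : Fin (N + 1)) (a : Fin k → Fin p) : rowSpace T k :=
  ⟨unfolding N p T k a, Submodule.subset_span ⟨a, rfl⟩⟩

noncomputable def rowBasis (k : Fin (N + 1)) :
    Module.Basis (Fin (unfolding N p T k).rank) ℝ (rowSpace T k) :=
  Module.finBasisOfFinrankEq ℝ _ (unfolding N p T k).rank_eq_finrank_span_row.symm

theorem unfolding_apply_eq_sum_repr (k : Fin (N + 1)) (a : Fin k → Fin p)
    (b : Fin (N - k) → Fin p) :
    unfolding N p T k a b
      = ∑ i, (rowBasis T k).repr (row T k a) i * (rowBasis T k i : _ → ℝ) b := by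
  have h := congrArg (fun f : rowSpace T k => (f : _ → ℝ) b)
    ((rowBasis T k).sum_repr (row T k a))
  simp only [Submodule.coe_sum, Submodule.coe_smul, Finset.sum_apply, Pi.smul_apply,
    smul_eq_mul] at h
  exact h.symm

noncomputable def shiftRow (k : Fin N) (s : Fin p) :
    rowSpace T k.castSucc →ₗ[ℝ] rowSpace T k.succ :=
  (LinearMap.funLeft ℝ ℝ (suffixCons k s)).restrict fun _ hf => by
    refine (Submodule.map_span_le _ _ _).mpr ?_ (Submodule.mem_map_of_mem hf)
    rintro _ ⟨a, rfl⟩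
    rw [funLeft_suffixCons_unfolding]
    exact Submodule.subset_span ⟨_, rfl⟩

theorem shiftRow_row (k : Fin N) (s : Fin p) (a : Fin k → Fin p) :
    shiftRow T k s (row T k.castSucc a) = row T k.succ (Fin.snoc a s) :=
  Subtype.ext (funLeft_suffixCons_unfolding T k s a)

noncomputable def core (k : Fin N) (i : Fin (unfolding N p T k.castSucc).rank) (s : Fin p)
    (j : Fin (unfolding N p T k.succ).rank) : ℝ :=
  LinearMap.toMatrix (rowBasis T k.castSucc) (rowBasis T k.succ) (shiftRow T k s) j i

theorem rowBasis_repr_row_snoc (k : Fin N) (a : Fin k → Fin p) (s : Fin p)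
    (j : Fin (unfolding N p T k.succ).rank) :
    (rowBasis T k.succ).repr (row T k.succ (Fin.snoc a s)) j
      = ∑ i, (rowBasis T k.castSucc).repr (row T k.castSucc a) i * core T k i s j := by
  rw [← shiftRow_row, ← LinearMap.toMatrix_mulVec_repr (rowBasis T k.castSucc)]
  simp only [Matrix.mulVec, dotProduct, core]
  exact sum_congr rfl fun i _ => mul_comm _ _

noncomputable def rowCoord (σ : Fin N → Fin p) (k : Fin (N + 1))
    (i : Fin (unfolding N p T k).rank) : ℝ :=
  (rowBasis T k).repr (row T k (Fin.take k k.is_le σ)) i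

theorem rowCoord_succ (σ : Fin N → Fin p) (k : Fin N) (j : Fin (unfolding N p T k.succ).rank) :
    rowCoord T σ k.succ j = ∑ i, rowCoord T σ k.castSucc i * core T k i (σ k) j := by
  change (rowBasis T k.succ).repr (row T k.succ (Fin.take (k + 1) k.isLt σ)) j = _
  rw [Fin.take_succ_eq_snoc]
  exact rowBasis_repr_row_snoc T k _ (σ k) j

theorem unfolding_last_take (σ : Fin N → Fin p) (b : Fin (N - N) → Fin p) :
    unfolding N p T (Fin.last N) (Fin.take N le_rfl σ) b = T σ := by
  simp [unfolding, Fin.take]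

end MPS

open MPS

/-- sequential SVD gives an exact MPS: every tensor
`T ∈ ℝ^{p × ⋯ × p}` admits an exact MPS decomposition whose bond dimension at
the cut after site `k` equals the rank `r_k` of the `k`-th unfolding matrix:
there are cores `A k : r_k × p × r_{k+1}` (boundary bonds are the ranks of the
trivial unfoldings) with
`T σ = Σ_{a} A⁽¹⁾_{a₀ σ₁ a₁} A⁽²⁾_{a₁ σ₂ a₂} ⋯ A⁽ᴺ⁾_{a_{N-1} σ_N a_N}`. -/
theorem sequential_svd_exact_mps (N p : ℕ) (hN : 1 ≤ N) (T : (Fin N → Fin p) → ℝ) :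
    ∃ A : (k : Fin N) →
        Fin ((unfolding N p T k.castSucc).rank) → Fin p →
          Fin ((unfolding N p T k.succ).rank) → ℝ,
      ∀ σ : Fin N → Fin p,
        T σ = ∑ a : (k : Fin (N + 1)) → Fin ((unfolding N p T k).rank),
          ∏ k : Fin N, A k (a k.castSucc) (σ k) (a k.succ) := by
  let empty : Fin (N - Fin.last N) → Fin p := fun i => absurd i.isLt (by simp)
  let u i := (rowBasis T 0).repr (row T 0 Fin.elim0) i
  let v (j : Fin (unfolding N p T (Fin.last N)).rank) : ℝ :=
    (rowBasis T (Fin.last N) j : _ → ℝ) empty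
  obtain ⟨A, hA⟩ := Fin.exists_prod_eq_mul_prod_mul
    (ι := fun k => Fin (unfolding N p T k).rank) hN u (core T) v
  refine ⟨A, fun σ => ?_⟩
  have hu : rowCoord T σ 0 = u := funext fun i => by
    simp only [rowCoord, u]
    congr 3 -- the tuple of length `0` is unique
  calc T σ = ∑ j, rowCoord T σ (Fin.last N) j * v j := by
        rw [← unfolding_last_take T σ empty, unfolding_apply_eq_sum_repr]
        rfl
    _ = ∑ a : (k : Fin (N + 1)) → Fin ((unfolding N p T k).rank), rowCoord T σ 0 (a 0) *
          (∏ k, core T k (a k.castSucc) (σ k) (a k.succ)) * v (a (Fin.last N)) :=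
        (Fin.sum_pi_mul_prod_mul_eq_sum_last (ι := fun k => Fin (unfolding N p T k).rank)
          (rowCoord T σ) (fun k i j => core T k i (σ k) j) (rowCoord_succ T σ) v).symm
    _ = _ := by
        rw [hu]
        exact sum_congr rfl fun a _ => (hA σ a).symm
end
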